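/- The two-sided negativity of quantumness is faithful: for every bipartite state ρ on ℂ^m ⊗ ℂ^n, Q_N^{AB}(ρ) = 0 if and only if there exist an m×m unitary U and an n×n unitary V such that (U ⊗ V)† ρ (U ⊗ V) is a diagonal matrix, i.e., if and only if ρ is classical-classical. -/

import Mathlib

open scoped Kronecker ComplexOrder
open Matrix

/-- The positive semidefinite square root, as `Matrix.PosSemidef.sqrt` was defined in the older Mathlib. -/
noncomputable def psdSqrt {n : Type*} [Fintype n] [DecidableEq n] {A : Matrix n n ℂ}
    (hA : A.PosSemidef) : Matrix n n ℂ :=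
  hA.1.eigenvectorUnitary.1 * diagonal ((↑) ∘ (√·) ∘ hA.1.eigenvalues) *
    (star hA.1.eigenvectorUnitary : Matrix n n ℂ)

noncomputable def traceNorm {ι : Type*} [Fintype ι] [DecidableEq ι] (A : Matrix ι ι ℂ) : ℝ :=
  ((psdSqrt (Matrix.posSemidef_conjTranspose_mul_self A)).trace).re

noncomputable def l1Norm {ι κ : Type*} [Fintype ι] [Fintype κ] (A : Matrix ι κ ℂ) : ℝ :=
  ∑ i, ∑ j, ‖A i j‖

def ptranspose {α β : Type*} (ρ : Matrix (α × β) (α × β) ℂ) : Matrix (α × β) (α × β) ℂ :=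
  Matrix.of fun p q => ρ (p.1, q.2) (q.1, p.2)

noncomputable def negativity {α β : Type*} [Fintype α] [Fintype β] [DecidableEq α] [DecidableEq β]
    (ρ : Matrix (α × β) (α × β) ℂ) : ℝ :=
  (traceNorm (ptranspose ρ) - 1) / 2

def matUnit {ι : Type*} [DecidableEq ι] (i j : ι) : Matrix ι ι ℂ :=
  Matrix.single i j 1

noncomputable def mcs {n : ℕ} (t : Fin n → Fin n → ℂ) :
    Matrix (Fin n × Fin n) (Fin n × Fin n) ℂ :=
  ∑ i, ∑ j, t i j • (matUnit i j ⊗ₖ matUnit i j)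

def blockOf {m n : ℕ} (ρ : Matrix (Fin m × Fin n) (Fin m × Fin n) ℂ) (i j : Fin m) :
    Matrix (Fin n) (Fin n) ℂ :=
  Matrix.of fun k l => ρ (i, k) (j, l)

noncomputable def conjU {m n : ℕ} (U : Matrix.unitaryGroup (Fin m) ℂ)
    (ρ : Matrix (Fin m × Fin n) (Fin m × Fin n) ℂ) : Matrix (Fin m × Fin n) (Fin m × Fin n) ℂ :=
  ((U : Matrix (Fin m) (Fin m) ℂ) ⊗ₖ (1 : Matrix (Fin n) (Fin n) ℂ))ᴴ * ρ *
    ((U : Matrix (Fin m) (Fin m) ℂ) ⊗ₖ (1 : Matrix (Fin n) (Fin n) ℂ))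

noncomputable def conjUV {m n : ℕ} (U : Matrix.unitaryGroup (Fin m) ℂ)
    (V : Matrix.unitaryGroup (Fin n) ℂ)
    (ρ : Matrix (Fin m × Fin n) (Fin m × Fin n) ℂ) : Matrix (Fin m × Fin n) (Fin m × Fin n) ℂ :=
  ((U : Matrix (Fin m) (Fin m) ℂ) ⊗ₖ (V : Matrix (Fin n) (Fin n) ℂ))ᴴ * ρ *
    ((U : Matrix (Fin m) (Fin m) ℂ) ⊗ₖ (V : Matrix (Fin n) (Fin n) ℂ))

noncomputable def QNA {m n : ℕ} (ρ : Matrix (Fin m × Fin n) (Fin m × Fin n) ℂ) : ℝ :=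
  ⨅ U : Matrix.unitaryGroup (Fin m) ℂ,
    ((∑ i, ∑ j, traceNorm (blockOf (conjU U ρ) i j)) - 1) / 2

noncomputable def QNAB {m n : ℕ} (ρ : Matrix (Fin m × Fin n) (Fin m × Fin n) ℂ) : ℝ :=
  ⨅ U : Matrix.unitaryGroup (Fin m) ℂ, ⨅ V : Matrix.unitaryGroup (Fin n) ℂ,
    (l1Norm (conjUV U V ρ) - 1) / 2

/-! For a positive semidefinite σ the diagonal entries are nonnegative reals summing to `tr σ`,
so `‖σ‖_{l1} = tr σ + Σ_{p ≠ q} |σ_pq|`. Hence for a state the quantity under the infimum is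
nonnegative and vanishes exactly when the locally rotated state is diagonal. It is continuous in
`(U, V)` and the unitary groups are compact, so the infimum is attained: it is `0` iff some product
unitary diagonalizes ρ. -/

open Finset

section L1Norm

variable {ι : Type*} [Fintype ι] [DecidableEq ι]

lemma l1Norm_eq_sum_diag_add_sum_offDiag (A : Matrix ι ι ℂ) :
    l1Norm A = ∑ p, ‖A p p‖ + ∑ p, ∑ q ∈ univ.erase p, ‖A p q‖ := by
  rw [l1Norm, ← sum_add_distrib]
  exact sum_congr rfl fun p _ => (add_sum_erase _ _ (mem_univ p)).symm

lemma Matrix.PosSemidef.l1Norm_eq_trace_re_add {σ : Matrix ι ι ℂ} (hσ : σ.PosSemidef) :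
    l1Norm σ = σ.trace.re + ∑ p, ∑ q ∈ univ.erase p, ‖σ p q‖ := by
  have hdiag (p : ι) : ‖σ p p‖ = (σ p p).re := by
    simpa using congrArg Complex.re (Complex.eq_coe_norm_of_nonneg hσ.diag_nonneg).symm
  simp only [l1Norm_eq_sum_diag_add_sum_offDiag, hdiag, trace, diag_apply, Complex.re_sum]

lemma Matrix.PosSemidef.trace_re_le_l1Norm {σ : Matrix ι ι ℂ} (hσ : σ.PosSemidef) :
    σ.trace.re ≤ l1Norm σ := by
  rw [hσ.l1Norm_eq_trace_re_add]
  exact le_add_of_nonneg_right (by positivity)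

lemma Matrix.PosSemidef.l1Norm_eq_trace_re_iff {σ : Matrix ι ι ℂ} (hσ : σ.PosSemidef) :
    l1Norm σ = σ.trace.re ↔ ∀ p q, p ≠ q → σ p q = 0 := by
  have hrow (p : ι) : ∑ q ∈ univ.erase p, ‖σ p q‖ = 0 ↔ ∀ q, q ≠ p → σ p q = 0 := by
    rw [sum_eq_zero_iff_of_nonneg fun _ _ => norm_nonneg _]
    simp only [mem_erase, mem_univ, and_true, norm_eq_zero]
  rw [hσ.l1Norm_eq_trace_re_add, add_eq_left,
    sum_eq_zero_iff_of_nonneg fun p _ => sum_nonneg fun q _ => norm_nonneg (σ p q)]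
  simp only [mem_univ, forall_const, hrow]
  exact forall_congr' fun p => forall_congr' fun q => by rw [ne_comm]

end L1Norm

instance Matrix.unitaryGroup.compactSpace {n 𝕜 : Type*} [Fintype n] [DecidableEq n]
    [RCLike 𝕜] : CompactSpace (Matrix.unitaryGroup n 𝕜) := by
  refine isCompact_iff_compactSpace.mp ?_
  refine (isCompact_univ_pi fun _ => isCompact_univ_pi fun _ => isCompact_closedBall (0 : 𝕜) 1)
    |>.of_isClosed_subset (isClosed_unitary (R := Matrix n n 𝕜)) ?_
  intro U hU i _ j _
  simpa using entry_norm_bound_of_unitary hU i j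

@[fun_prop]
lemma Continuous.matrix_kronecker {X R l m n p : Type*} [TopologicalSpace X] [TopologicalSpace R]
    [Mul R] [ContinuousMul R] {A : X → Matrix l m R} {B : X → Matrix n p R}
    (hA : Continuous A) (hB : Continuous B) : Continuous fun x => A x ⊗ₖ B x :=
  continuous_matrix fun i j => (hA.matrix_elem i.1 j.1).mul (hB.matrix_elem i.2 j.2)

lemma trace_conjUV {m n : ℕ} (ρ : Matrix (Fin m × Fin n) (Fin m × Fin n) ℂ)
    (U : Matrix.unitaryGroup (Fin m) ℂ) (V : Matrix.unitaryGroup (Fin n) ℂ) :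
    (conjUV U V ρ).trace = ρ.trace := by
  have hW := Unitary.mul_star_self_of_mem (kronecker_mem_unitary U.2 V.2)
  rw [conjUV, trace_mul_comm, ← mul_assoc, ← star_eq_conjTranspose, hW, one_mul]

lemma Continuous.iInf_eq_zero_iff {X : Type*} [TopologicalSpace X] [CompactSpace X] [Nonempty X]
    {g : X → ℝ} (hg : Continuous g) (h0 : 0 ≤ g) : ⨅ x, g x = 0 ↔ ∃ x, g x = 0 := by
  obtain ⟨x₀, hx₀⟩ := (isCompact_range hg).sInf_mem (Set.range_nonempty g)
  refine ⟨fun h => ⟨x₀, hx₀.trans h⟩, fun ⟨x, hx⟩ => le_antisymm ?_ (le_ciInf h0)⟩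
  exact hx ▸ ciInf_le (isCompact_range hg).bddBelow x

/-- faithfulness of the two-sided negativity of quantumness: it vanishes
iff the state is diagonal in some local product basis (classical-classical). -/
theorem stmt_18 {m n : ℕ} (ρ : Matrix (Fin m × Fin n) (Fin m × Fin n) ℂ)
    (hpos : ρ.PosSemidef) (htr : ρ.trace = 1) :
    QNAB ρ = 0 ↔ ∃ (U : Matrix.unitaryGroup (Fin m) ℂ) (V : Matrix.unitaryGroup (Fin n) ℂ),
      ∀ p q, p ≠ q → conjUV U V ρ p q = 0 := by
  set g : Matrix.unitaryGroup (Fin m) ℂ × Matrix.unitaryGroup (Fin n) ℂ → ℝ :=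
    fun p => (l1Norm (conjUV p.1 p.2 ρ) - 1) / 2
  have hσ (U V) : (conjUV U V ρ).PosSemidef := hpos.conjTranspose_mul_mul_same _
  have htrσ (U V) : (conjUV U V ρ).trace.re = 1 := by rw [trace_conjUV, htr, Complex.one_re]
  have hg : Continuous g := by
    unfold g l1Norm conjUV
    fun_prop
  have hg0 : 0 ≤ g := fun p =>
    div_nonneg (sub_nonneg.mpr (htrσ p.1 p.2 ▸ (hσ p.1 p.2).trace_re_le_l1Norm)) zero_le_two
  have hQ : QNAB ρ = ⨅ p, g p := (ciInf_prod (isCompact_range hg).bddBelow).symm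
  rw [hQ, hg.iInf_eq_zero_iff hg0, Prod.exists]
  refine exists₂_congr fun U V => ?_
  rw [← (hσ U V).l1Norm_eq_trace_re_iff, htrσ]
  simp only [g, div_eq_zero_iff, sub_eq_zero, two_ne_zero, or_false]
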